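/- Let X be a non-reflexive complex Banach space, let V = X* with dim V ≥ 2, and let f ∈ V* be the evaluation functional at some nonzero x₀ ∈ X with ‖x₀‖ ≤ 1 (so f is nonzero, w*-continuous, and ‖f‖ ≤ 1). Equip V with the product a b := f(a)·b, making V a dual Banach algebra V_f with predual X. Then σwc(V_f) = ker f. -/

import Mathlib

/-! In `V_f` left multiplication by `v` is `a ↦ a(x₀) • v`, which is always w*-weak continuous,
and right multiplication by `v` is `a ↦ v(x₀) • a`. If `v(x₀) ≠ 0`, w*-weak continuity of the
latter makes the identity of `V` w*-weak continuous, so every functional on `V` is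
w*-continuous. A w*-continuous functional is bounded by finitely many evaluations, hence lies in
their span, i.e. is evaluation at a point of `X`; then `X` would be reflexive. -/

noncomputable section

open Filter Topology

universe u

/-- The locally convex topology on `A` induced by a pairing `p : A → X → ℂ`,
i.e. the initial topology for the family of maps `a ↦ p a x`, `x : X`. -/
def topOfPairing {A X : Type*} (p : A → X → ℂ) : TopologicalSpace A :=
  TopologicalSpace.induced p Pi.topologicalSpace

theorem continuous_topOfPairing_iff {B A X : Type*} {tB : TopologicalSpace B}
    {p : A → X → ℂ} {f : B → A} :
    Continuous[tB, topOfPairing p] f ↔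
      ∀ x, Continuous[tB, inferInstance] fun b => p (f b) x := by
  rw [topOfPairing, continuous_induced_rng, continuous_pi_iff]
  exact Iff.rfl

theorem topOfPairing_eval_cont {A X : Type*} (p : A → X → ℂ) (x : X) :
    Continuous[topOfPairing p, inferInstance] fun a => p a x :=
  continuous_topOfPairing_iff.1 (@continuous_id _ (topOfPairing p)) x

/-- The weak topology `σ(E, E*)` on a normed space `E`. -/
def weakTop (E : Type u) [NormedAddCommGroup E] [NormedSpace ℂ E] : TopologicalSpace E :=
  topOfPairing fun x (φ : E →L[ℂ] ℂ) => φ x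

/-- The weak-* topology `σ(E*, E)` on the dual of a normed space `E`. -/
def wstarD (E : Type u) [NormedAddCommGroup E] [NormedSpace ℂ E] :
    TopologicalSpace (E →L[ℂ] ℂ) :=
  topOfPairing fun Λ (x : E) => Λ x

section Core

variable {A X : Type u} [NormedAddCommGroup A] [NormedSpace ℂ A]
  [NormedAddCommGroup X] [NormedSpace ℂ X]

/-- The weak-* topology `σ(A, X)` on a dual Banach space `A`, where the duality with the
predual `X` is implemented by an isometric linear isomorphism `ρ : A ≅ X*`. -/
def wstar (ρ : A ≃ₗᵢ[ℂ] (X →L[ℂ] ℂ)) : TopologicalSpace A :=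
  topOfPairing fun a (x : X) => ρ a x

theorem weakTop_cont_iff {B : Type*} {tB : TopologicalSpace B} {E : Type u}
    [NormedAddCommGroup E] [NormedSpace ℂ E] {f : B → E} :
    Continuous[tB, weakTop E] f ↔
      ∀ φ : E →L[ℂ] ℂ, Continuous[tB, inferInstance] fun b => φ (f b) :=
  continuous_topOfPairing_iff

namespace WeakCont

variable {B : Type*} {E F : Type u} [NormedAddCommGroup E] [NormedSpace ℂ E]
  [NormedAddCommGroup F] [NormedSpace ℂ F]

theorem clm_comp (tB : TopologicalSpace B) (L : E →L[ℂ] F) {f : B → E}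
    (hf : Continuous[tB, weakTop E] f) : Continuous[tB, weakTop F] fun b => L (f b) :=
  weakTop_cont_iff.2 fun φ => weakTop_cont_iff.1 hf (φ.comp L)

theorem add (tB : TopologicalSpace B) {f g : B → E} (hf : Continuous[tB, weakTop E] f)
    (hg : Continuous[tB, weakTop E] g) : Continuous[tB, weakTop E] fun b => f b + g b := by
  refine weakTop_cont_iff.2 fun φ => ?_
  letI := tB
  have h : Continuous fun b => φ (f b) + φ (g b) :=
    (weakTop_cont_iff.1 hf φ).add (weakTop_cont_iff.1 hg φ)
  simpa [map_add] using h

theorem const_smul (tB : TopologicalSpace B) {f : B → E} (hf : Continuous[tB, weakTop E] f)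
    (c : ℂ) : Continuous[tB, weakTop E] fun b => c • f b := by
  refine weakTop_cont_iff.2 fun φ => ?_
  letI := tB
  have h : Continuous fun b => c * φ (f b) := (weakTop_cont_iff.1 hf φ).const_smul c
  simpa [map_smul, smul_eq_mul] using h

theorem zero (tB : TopologicalSpace B) :
    Continuous[tB, weakTop E] fun _ : B => (0 : E) := by
  refine weakTop_cont_iff.2 fun φ => ?_
  letI := tB
  simpa using (continuous_const : Continuous fun _ : B => (0 : ℂ))

end WeakCont

/-- A Banach algebra structure on a normed space `A`: an associative continuous bilinear
multiplication satisfying `‖a * b‖ ≤ ‖a‖ * ‖b‖`. -/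
structure BanachAlgStr (A : Type u) [NormedAddCommGroup A] [NormedSpace ℂ A] where
  mul : A →L[ℂ] A →L[ℂ] A
  mul_assoc : ∀ a b c, mul (mul a b) c = mul a (mul b c)
  norm_mul_le : ∀ a b, ‖mul a b‖ ≤ ‖a‖ * ‖b‖

/-- `A`, with predual `X` (via `ρ`) and multiplication `S`, is a dual Banach algebra:
the multiplication is separately continuous for the weak-* topology `σ(A, X)`. -/
structure IsDualBanachAlgebra (ρ : A ≃ₗᵢ[ℂ] (X →L[ℂ] ℂ)) (S : BanachAlgStr A) : Prop where
  mul_left : ∀ a, Continuous[wstar ρ, wstar ρ] fun b => S.mul a b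
  mul_right : ∀ a, Continuous[wstar ρ, wstar ρ] fun b => S.mul b a

/-- A Banach `A`-bimodule structure (for the Banach algebra `(A, S)`) on a normed space `E`:
continuous bilinear left and right actions `l`, `r` which commute and are associative
for the multiplication `S.mul`. -/
structure BanachBimodule {A : Type u} [NormedAddCommGroup A] [NormedSpace ℂ A]
    (S : BanachAlgStr A) (E : Type u) [NormedAddCommGroup E] [NormedSpace ℂ E] where
  l : A →L[ℂ] E →L[ℂ] E
  r : A →L[ℂ] E →L[ℂ] E
  l_mul : ∀ a b x, l (S.mul a b) x = l a (l b x)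
  r_mul : ∀ a b x, r (S.mul a b) x = r b (r a x)
  lr_comm : ∀ a b x, l a (r b x) = r b (l a x)

/-- `A` as a Banach bimodule over itself, via multiplication. -/
def BanachAlgStr.toBimodule (S : BanachAlgStr A) : BanachBimodule S A where
  l := S.mul
  r := S.mul.flip
  l_mul := fun a b x => S.mul_assoc a b x
  r_mul := fun a b x => (S.mul_assoc x a b).symm
  lr_comm := fun a b x => (S.mul_assoc a x b).symm

variable {E : Type u} [NormedAddCommGroup E] [NormedSpace ℂ E]

/-- `σwc(E)`: the set of `x ∈ E` such that the maps `a ↦ a · x` and `a ↦ x · a` are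
continuous from the weak-* topology on `A` into the weak topology on `E`.
It is a (closed) linear subspace of `E`. -/
def sigmaWC (ρ : A ≃ₗᵢ[ℂ] (X →L[ℂ] ℂ)) {S : BanachAlgStr A} (M : BanachBimodule S E) :
    Submodule ℂ E where
  carrier := {x | Continuous[wstar ρ, weakTop E] (fun a => M.l a x) ∧
    Continuous[wstar ρ, weakTop E] fun a => M.r a x}
  add_mem' := by
    rintro x y ⟨h1, h2⟩ ⟨h3, h4⟩
    constructor
    · simp only [map_add]
      exact WeakCont.add _ h1 h3
    · simp only [map_add]
      exact WeakCont.add _ h2 h4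
  zero_mem' := by
    constructor
    · simp only [map_zero]
      exact WeakCont.zero _
    · simp only [map_zero]
      exact WeakCont.zero _
  smul_mem' := by
    rintro c x ⟨h1, h2⟩
    constructor
    · simp only [map_smul]
      exact WeakCont.const_smul _ h1 c
    · simp only [map_smul]
      exact WeakCont.const_smul _ h2 c

theorem smulL_mem_sigmaWC {ρ : A ≃ₗᵢ[ℂ] (X →L[ℂ] ℂ)} {S : BanachAlgStr A}
    {M : BanachBimodule S E} (hA : IsDualBanachAlgebra ρ S) {x : E}
    (hx : x ∈ sigmaWC ρ M) (a : A) : M.l a x ∈ sigmaWC ρ M := by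
  obtain ⟨h1, h2⟩ := hx
  constructor
  · have he : (fun c => M.l c (M.l a x)) = fun c => M.l (S.mul c a) x :=
      funext fun c => (M.l_mul c a x).symm
    rw [he]
    exact @Continuous.comp A A E (wstar ρ) (wstar ρ) (weakTop E) _ _ h1 (hA.mul_right a)
  · have he : (fun c => M.r c (M.l a x)) = fun c => M.l a (M.r c x) :=
      funext fun c => (M.lr_comm a c x).symm
    rw [he]
    exact WeakCont.clm_comp _ (M.l a) h2

theorem smulR_mem_sigmaWC {ρ : A ≃ₗᵢ[ℂ] (X →L[ℂ] ℂ)} {S : BanachAlgStr A}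
    {M : BanachBimodule S E} (hA : IsDualBanachAlgebra ρ S) {x : E}
    (hx : x ∈ sigmaWC ρ M) (a : A) : M.r a x ∈ sigmaWC ρ M := by
  obtain ⟨h1, h2⟩ := hx
  constructor
  · have he : (fun c => M.l c (M.r a x)) = fun c => M.r a (M.l c x) :=
      funext fun c => M.lr_comm c a x
    rw [he]
    exact WeakCont.clm_comp _ (M.r a) h1
  · have he : (fun c => M.r c (M.r a x)) = fun c => M.r (S.mul a c) x :=
      funext fun c => (M.r_mul a c x).symm
    rw [he]
    exact @Continuous.comp A A E (wstar ρ) (wstar ρ) (weakTop E) _ _ h2 (hA.mul_left a)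

/-- `j_E : E* → σwc(E)*`, restriction of functionals (the adjoint of the inclusion
`σwc(E) ↪ E`). -/
def jmap (ρ : A ≃ₗᵢ[ℂ] (X →L[ℂ] ℂ)) {S : BanachAlgStr A} (M : BanachBimodule S E)
    (φ : E →L[ℂ] ℂ) : ↥(sigmaWC ρ M) →L[ℂ] ℂ :=
  φ.comp (sigmaWC ρ M).subtypeL

/-- The left dual action of `A` on `σwc(E)*`: `(a · Λ)(x) = Λ(x · a)`. -/
def dualL {ρ : A ≃ₗᵢ[ℂ] (X →L[ℂ] ℂ)} {S : BanachAlgStr A} {M : BanachBimodule S E}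
    (hA : IsDualBanachAlgebra ρ S) (a : A) (Λ : ↥(sigmaWC ρ M) →L[ℂ] ℂ) :
    ↥(sigmaWC ρ M) →L[ℂ] ℂ :=
  Λ.comp (ContinuousLinearMap.codRestrict ((M.r a).comp (sigmaWC ρ M).subtypeL)
    (sigmaWC ρ M) fun x => smulR_mem_sigmaWC hA x.2 a)

/-- The right dual action of `A` on `σwc(E)*`: `(Λ · a)(x) = Λ(a · x)`. -/
def dualR {ρ : A ≃ₗᵢ[ℂ] (X →L[ℂ] ℂ)} {S : BanachAlgStr A} {M : BanachBimodule S E}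
    (hA : IsDualBanachAlgebra ρ S) (a : A) (Λ : ↥(sigmaWC ρ M) →L[ℂ] ℂ) :
    ↥(sigmaWC ρ M) →L[ℂ] ℂ :=
  Λ.comp (ContinuousLinearMap.codRestrict ((M.l a).comp (sigmaWC ρ M).subtypeL)
    (sigmaWC ρ M) fun x => smulL_mem_sigmaWC hA x.2 a)

/-- `D : A → E*` is a derivation for the dual bimodule actions of `A` on `E*`,
i.e. `D(ab) = a · D(b) + D(a) · b`, where `(a · φ)(x) = φ(x · a)` and
`(φ · a)(x) = φ(a · x)`. -/
def IsDerivationToDual (S : BanachAlgStr A) (M : BanachBimodule S E)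
    (D : A →L[ℂ] (E →L[ℂ] ℂ)) : Prop :=
  ∀ a b, D (S.mul a b) = (D b).comp (M.r a) + (D a).comp (M.l b)

/-- `D : A → E` is a derivation for the bimodule actions of `A` on `E`:
`D(ab) = a · D(b) + D(a) · b`. -/
def IsDerivationInto (S : BanachAlgStr A) (M : BanachBimodule S E)
    (D : A →L[ℂ] E) : Prop :=
  ∀ a b, D (S.mul a b) = M.l a (D b) + M.r b (D a)

/-- The dual Banach algebra `(A, ρ, S)` is weakly Connes amenable: for every derivation
`D : A → A*` such that `j_A ∘ D : A → σwc(A)*` is weak-*–weak-* continuous, the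
derivation `j_A ∘ D` is inner, i.e. of the form `a ↦ a · Φ - Φ · a` for some
`Φ ∈ σwc(A)*`. -/
def WeaklyConnesAmenable (ρ : A ≃ₗᵢ[ℂ] (X →L[ℂ] ℂ)) (S : BanachAlgStr A)
    (hA : IsDualBanachAlgebra ρ S) : Prop :=
  ∀ D : A →L[ℂ] (A →L[ℂ] ℂ), IsDerivationToDual S S.toBimodule D →
    Continuous[wstar ρ, wstarD ↥(sigmaWC ρ S.toBimodule)]
      (fun a => jmap ρ S.toBimodule (D a)) →
    ∃ Φ, ∀ a, jmap ρ S.toBimodule (D a) = dualL hA a Φ - dualR hA a Φ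

end Core

section Vf

/-- The Banach algebra `V_f`: `V = X*` equipped with the product `a * b := f(a) • b`,
where `f` is the (`w*`-continuous, norm at most one) functional of evaluation at a point
`x₀ ∈ X` with `‖x₀‖ ≤ 1`. -/
def VfStr (X : Type u) [NormedAddCommGroup X] [NormedSpace ℂ X] (x₀ : X)
    (h : ‖x₀‖ ≤ 1) : BanachAlgStr (X →L[ℂ] ℂ) where
  mul := (NormedSpace.inclusionInDoubleDual ℂ X x₀).smulRight
    (ContinuousLinearMap.id ℂ (X →L[ℂ] ℂ))
  mul_assoc := by
    intro a b c
    simp [ContinuousLinearMap.smulRight_apply, ContinuousLinearMap.smul_apply,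
      NormedSpace.dual_def, smul_smul, mul_comm]
  norm_mul_le := by
    intro a b
    have he : ((NormedSpace.inclusionInDoubleDual ℂ X x₀).smulRight
        (ContinuousLinearMap.id ℂ (X →L[ℂ] ℂ))) a b = a x₀ • b := by
      simp [NormedSpace.dual_def]
    rw [he]
    calc ‖a x₀ • b‖ ≤ ‖a x₀‖ * ‖b‖ := ContinuousLinearMap.opNorm_smul_le _ _
      _ ≤ (‖a‖ * ‖x₀‖) * ‖b‖ :=
          mul_le_mul_of_nonneg_right (a.le_opNorm x₀) (norm_nonneg b)
      _ ≤ ‖a‖ * ‖b‖ :=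
          mul_le_mul_of_nonneg_right (mul_le_of_le_one_right (norm_nonneg a) h)
            (norm_nonneg b)

theorem VfStr_mul_apply {X : Type u} [NormedAddCommGroup X] [NormedSpace ℂ X] {x₀ : X}
    {h : ‖x₀‖ ≤ 1} (a b : X →L[ℂ] ℂ) : (VfStr X x₀ h).mul a b = a x₀ • b := by
  simp [VfStr, NormedSpace.dual_def]

end Vf

theorem WeakCont.of_const_smul {B : Type*} {tB : TopologicalSpace B} {E : Type u}
    [NormedAddCommGroup E] [NormedSpace ℂ E] {f : B → E} {c : ℂ} (hc : c ≠ 0)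
    (h : Continuous[tB, weakTop E] fun b => c • f b) : Continuous[tB, weakTop E] f := by
  simpa only [smul_smul, inv_mul_cancel₀ hc, one_smul] using WeakCont.const_smul _ h c⁻¹

section WeakStar

variable {A X : Type u} [NormedAddCommGroup A] [NormedSpace ℂ A]
  [NormedAddCommGroup X] [NormedSpace ℂ X]

theorem exists_eq_apply_of_continuous_wstar {ρ : A ≃ₗᵢ[ℂ] (X →L[ℂ] ℂ)} (Φ : A →L[ℂ] ℂ)
    (hΦ : Continuous[wstar ρ, inferInstance] Φ) : ∃ x : X, ∀ a, Φ a = ρ a x := by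
  let ev : X →ₗ[ℂ] A →ₗ[ℂ] ℂ := (ContinuousLinearMap.coeLM ℂ).comp
    (ρ.toContinuousLinearEquiv.toContinuousLinearMap.flip : X →L[ℂ] A →L[ℂ] ℂ).toLinearMap
  have hwstar : wstar ρ = ⨅ x, TopologicalSpace.induced (ev x) inferInstance :=
    induced_to_pi _
  have hspan : Φ.toLinearMap ∈ Submodule.span ℂ (Set.range ev) := by
    rw [LinearMap.mem_span_iff_continuous, ← hwstar]
    exact hΦ
  rw [← LinearMap.coe_range, Submodule.span_eq] at hspan
  obtain ⟨x, hx⟩ := hspan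
  exact ⟨x, fun a => (LinearMap.congr_fun hx a).symm⟩

theorem inclusionInDoubleDual_surjective_of_continuous_id_wstar_weakTop
    (h : Continuous[wstar (LinearIsometryEquiv.refl ℂ (X →L[ℂ] ℂ)), weakTop (X →L[ℂ] ℂ)] id) :
    Function.Surjective (NormedSpace.inclusionInDoubleDual ℂ X) := fun Φ => by
  obtain ⟨x, hx⟩ := exists_eq_apply_of_continuous_wstar Φ (weakTop_cont_iff.1 h Φ)
  exact ⟨x, ContinuousLinearMap.ext fun a => (hx a).symm⟩

theorem continuous_apply_smul_wstar_weakTop {E : Type u} [NormedAddCommGroup E]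
    [NormedSpace ℂ E] (ρ : A ≃ₗᵢ[ℂ] (X →L[ℂ] ℂ)) (x : X) (e : E) :
    Continuous[wstar ρ, weakTop E] fun a => ρ a x • e := by
  refine weakTop_cont_iff.2 fun φ => ?_
  simp only [map_smul, smul_eq_mul]
  let _ : TopologicalSpace A := wstar ρ
  exact (topOfPairing_eval_cont _ x).mul continuous_const

end WeakStar

section Vf

variable {X : Type u} [NormedAddCommGroup X] [NormedSpace ℂ X] {x₀ : X} {h : ‖x₀‖ ≤ 1}

theorem VfStr_toBimodule_l_apply (a v : X →L[ℂ] ℂ) :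
    (VfStr X x₀ h).toBimodule.l a v = a x₀ • v :=
  VfStr_mul_apply (h := h) a v

theorem VfStr_toBimodule_r_apply (a v : X →L[ℂ] ℂ) :
    (VfStr X x₀ h).toBimodule.r a v = v x₀ • a :=
  VfStr_mul_apply (h := h) v a

end Vf

theorem sigmaWC_Vf_eq_ker_general {X : Type u} [NormedAddCommGroup X] [NormedSpace ℂ X]
    (hnr : ¬ Function.Surjective (NormedSpace.inclusionInDoubleDual ℂ X))
    (x₀ : X) (hn : ‖x₀‖ ≤ 1) :
    sigmaWC (LinearIsometryEquiv.refl ℂ (X →L[ℂ] ℂ)) (VfStr X x₀ hn).toBimodule =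
      LinearMap.ker ((NormedSpace.inclusionInDoubleDual ℂ X x₀ : (X →L[ℂ] ℂ) →ₗ[ℂ] ℂ)) := by
  ext v
  rw [LinearMap.mem_ker, ContinuousLinearMap.coe_coe, NormedSpace.dual_def]
  constructor
  · rintro ⟨-, hr⟩
    by_contra hv
    simp_rw [VfStr_toBimodule_r_apply] at hr
    exact hnr (inclusionInDoubleDual_surjective_of_continuous_id_wstar_weakTop
      (WeakCont.of_const_smul hv hr))
  · intro hv
    refine ⟨?_, ?_⟩
    · simp_rw [VfStr_toBimodule_l_apply]
      exact continuous_apply_smul_wstar_weakTop (LinearIsometryEquiv.refl ℂ _) x₀ v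
    · have hr (a : X →L[ℂ] ℂ) : (VfStr X x₀ hn).toBimodule.r a v = 0 := by
        rw [VfStr_toBimodule_r_apply, hv]
        -- the action here is not reducibly the `Module` one, so `simp` cannot use `zero_smul`
        exact zero_smul ℂ a
      simp only [hr]
      exact WeakCont.zero _

/-- **Proposition 4.6 (i).** Let `X` be a non-reflexive complex Banach space, `V = X*`
with `dim V ≥ 2`, and let `f ∈ V*` be the (w*-continuous, nonzero, `‖f‖ ≤ 1`) functional
of evaluation at a nonzero `x₀ ∈ X` with `‖x₀‖ ≤ 1`.  For the dual Banach algebra `V_f`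
(`V` with product `a b := f(a) • b` and predual `X`): `σwc(V_f) = ker f`. -/
theorem sigmaWC_Vf_eq_ker {X : Type u} [NormedAddCommGroup X] [NormedSpace ℂ X]
    [CompleteSpace X]
    (hnr : ¬ Function.Surjective (NormedSpace.inclusionInDoubleDual ℂ X))
    (x₀ : X) (hx₀ : x₀ ≠ 0) (hn : ‖x₀‖ ≤ 1)
    (hdim : 2 ≤ Module.rank ℂ (X →L[ℂ] ℂ)) :
    sigmaWC (LinearIsometryEquiv.refl ℂ (X →L[ℂ] ℂ)) (VfStr X x₀ hn).toBimodule =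
      LinearMap.ker ((NormedSpace.inclusionInDoubleDual ℂ X x₀ : (X →L[ℂ] ℂ) →ₗ[ℂ] ℂ)) :=
  sigmaWC_Vf_eq_ker_general hnr x₀ hn
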